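/- arXiv:2211.04111 — 3 statements merged into one kernel-verified Lean document; each statement's English description precedes it below -/
import Mathlib

section
/- (Vaserstein) Let R be a commutative ring, δ ∈ SL_n(R), and V ∈ Um_{n,m}(R) with m > n ≥ 2 or m = n ≥ 3. Then there exists σ ∈ SL_m(R) such that δV = Vσ and the block diagonal matrix σ ⊥ δ^{-1} lies in E_{n+m}(R). -/
open Matrix Polynomial

/-- `ElemGroup R k` is the elementary subgroup `E_k(R)`: generated by the elementary
matrices `e_ij(λ) = I + λ E_ij`, `i ≠ j`. -/
def ElemGroup (R : Type*) [CommRing R] (k : ℕ) : Submonoid (Matrix (Fin k) (Fin k) R) :=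
  Submonoid.closure {A | ∃ (i j : Fin k) (c : R), i ≠ j ∧ A = Matrix.transvection i j c}

/-- `matPerp A B` is the block diagonal matrix `A ⊥ B = diag(A, B)`. -/
def matPerp {R : Type*} [Zero R] {a b : ℕ}
    (A : Matrix (Fin a) (Fin a) R) (B : Matrix (Fin b) (Fin b) R) :
    Matrix (Fin (a + b)) (Fin (a + b)) R :=
  Matrix.reindex finSumFinEquiv finSumFinEquiv (Matrix.fromBlocks A 0 0 B)

/-! Take a right inverse `B` of `V` and put `Y = (δ - 1) V`, so that `1 + Y B = δ`, and
`σ = 1 + B Y`. Then `δ V = V σ` and `det σ = det δ = 1`. Whitehead's identity writes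
`diag(1 + B Y, (1 + Y B)⁻¹)` as a product of four block unipotent matrices
`[1 *; 0 1]`, `[1 0; * 1]`, and each of these is a product of elementary transvections. -/

namespace Matrix

section BlockAlgebra

variable {l o α : Type*} [Fintype l] [Fintype o] [DecidableEq l] [DecidableEq o] [Ring α]

theorem fromBlocks_one_add_zero_one (X Y : Matrix l o α) :
    (fromBlocks 1 (X + Y) 0 1 : Matrix (l ⊕ o) (l ⊕ o) α) =
      fromBlocks 1 X 0 1 * fromBlocks 1 Y 0 1 := by
  simp [fromBlocks_multiply, add_comm]

theorem fromBlocks_one_add_mul_eq_prod (B : Matrix l o α) (Y : Matrix o l α)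
    (δ' : Matrix o o α) (hr : (1 + Y * B) * δ' = 1) (hl : δ' * (1 + Y * B) = 1) :
    fromBlocks (1 + B * Y) 0 0 δ' =
      fromBlocks 1 B 0 1 * fromBlocks 1 0 Y 1 * fromBlocks 1 (-(B * δ')) 0 1 *
        fromBlocks 1 0 (-((1 + Y * B) * Y)) 1 := by
  have top_right : (1 + B * Y) * (B * δ') = B :=
    calc (1 + B * Y) * (B * δ') = B * ((1 + Y * B) * δ') := by
          simp only [Matrix.add_mul, Matrix.mul_add, Matrix.one_mul, Matrix.mul_assoc]
      _ = B := by rw [hr, Matrix.mul_one]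
  have bottom_right : 1 - Y * (B * δ') = δ' := by
    rw [← hr, Matrix.add_mul, Matrix.one_mul, Matrix.mul_assoc, add_sub_cancel_right]
  have bottom_left : δ' * ((1 + Y * B) * Y) = Y := by
    rw [← Matrix.mul_assoc, hl, Matrix.one_mul]
  have h₁ : (fromBlocks 1 B 0 1 * fromBlocks 1 0 Y 1 : Matrix (l ⊕ o) (l ⊕ o) α) =
      fromBlocks (1 + B * Y) B Y 1 := by
    simp [fromBlocks_multiply]
  have h₂ : fromBlocks (1 + B * Y) B Y 1 * fromBlocks 1 (-(B * δ')) 0 1 =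
      fromBlocks (1 + B * Y) 0 Y δ' := by
    simp [fromBlocks_multiply, top_right, ← sub_eq_neg_add, bottom_right]
  have h₃ : fromBlocks (1 + B * Y) 0 Y δ' * fromBlocks 1 0 (-((1 + Y * B) * Y)) 1 =
      fromBlocks (1 + B * Y) 0 0 δ' := by
    simp [fromBlocks_multiply, bottom_left]
  rw [h₁, h₂, h₃]

end BlockAlgebra

end Matrix

section Elementary

variable {R : Type*} [CommRing R] {k : ℕ}

theorem reindex_transvection_mem_elemGroup {ι : Type*} [Fintype ι] [DecidableEq ι]
    (e : ι ≃ Fin k) {i j : ι} (hij : i ≠ j) (c : R) :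
    reindex e e (transvection i j c) ∈ ElemGroup R k :=
  Submonoid.subset_closure ⟨e i, e j, c, e.injective.ne hij,
    (TransvectionStruct.toMatrix_reindexEquiv e ⟨i, j, hij, c⟩).symm⟩

variable {l o : Type*} [Fintype l] [Fintype o] [DecidableEq l] [DecidableEq o]

omit [Fintype l] [Fintype o] in
theorem fromBlocks_one_single_zero_one (i : l) (j : o) (c : R) :
    fromBlocks 1 (single i j c) 0 1 = transvection (Sum.inl i) (Sum.inr j) c := by
  ext (a | a) (b | b) <;> simp [transvection, one_apply, single_apply]

theorem reindex_fromBlocks_upper_unipotent_mem_elemGroup (e : l ⊕ o ≃ Fin k)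
    (X : Matrix l o R) : reindex e e (fromBlocks 1 X 0 1) ∈ ElemGroup R k := by
  induction X using Matrix.induction_on' with
  | h_zero => simp [fromBlocks_one]
  | h_add X Y hX hY =>
    rw [fromBlocks_one_add_zero_one, ← coe_reindexAlgEquiv R, map_mul]
    exact mul_mem hX hY
  | h_std_basis i j c =>
    rw [fromBlocks_one_single_zero_one]
    exact reindex_transvection_mem_elemGroup e Sum.inl_ne_inr c

theorem reindex_fromBlocks_lower_unipotent_mem_elemGroup (e : l ⊕ o ≃ Fin k)
    (X : Matrix o l R) : reindex e e (fromBlocks 1 0 X 1) ∈ ElemGroup R k := by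
  rw [← fromBlocks_submatrix_sum_swap_sum_swap (1 : Matrix o o R) X 0 1]
  exact reindex_fromBlocks_upper_unipotent_mem_elemGroup ((Equiv.sumComm o l).trans e) X

theorem reindex_fromBlocks_one_add_mul_mem_elemGroup (e : l ⊕ o ≃ Fin k)
    (B : Matrix l o R) (Y : Matrix o l R) (h : IsUnit (1 + Y * B).det) :
    reindex e e (fromBlocks (1 + B * Y) 0 0 (1 + Y * B)⁻¹) ∈ ElemGroup R k := by
  rw [fromBlocks_one_add_mul_eq_prod B Y _ (mul_nonsing_inv _ h) (nonsing_inv_mul _ h)]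
  simp only [← coe_reindexAlgEquiv R, map_mul]
  exact mul_mem (mul_mem (mul_mem (reindex_fromBlocks_upper_unipotent_mem_elemGroup e _)
    (reindex_fromBlocks_lower_unipotent_mem_elemGroup e _))
    (reindex_fromBlocks_upper_unipotent_mem_elemGroup e _))
    (reindex_fromBlocks_lower_unipotent_mem_elemGroup e _)

end Elementary

/-- Vaserstein. -/
theorem stmt4 {R : Type*} [CommRing R] {n m : ℕ}
    (δ : Matrix (Fin n) (Fin n) R) (hδ : δ.det = 1)
    (V : Matrix (Fin n) (Fin m) R) (hV : ∃ B : Matrix (Fin m) (Fin n) R, V * B = 1) :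
    ∃ σ : Matrix (Fin m) (Fin m) R, σ.det = 1 ∧ δ * V = V * σ ∧
      Matrix.reindex (finCongr (by omega : m + n = n + m)) (finCongr (by omega : m + n = n + m))
        (matPerp σ δ⁻¹) ∈ ElemGroup R (n + m) := by
  obtain ⟨B, hB⟩ := hV
  set Y := (δ - 1) * V with hY
  have hYB : 1 + Y * B = δ := by
    rw [hY, Matrix.mul_assoc, hB, Matrix.mul_one, add_sub_cancel]
  refine ⟨1 + B * Y, ?_, ?_, ?_⟩
  · rw [det_one_add_mul_comm, hYB, hδ]
  · rw [Matrix.mul_add, ← Matrix.mul_assoc, hB, Matrix.mul_one, Matrix.one_mul, hY,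
      Matrix.sub_mul, Matrix.one_mul, add_sub_cancel]
  · have hunit : IsUnit (1 + Y * B).det := by rw [hYB, hδ]; exact isUnit_one
    convert reindex_fromBlocks_one_add_mul_mem_elemGroup
      (finSumFinEquiv.trans (finCongr (add_comm m n))) B Y hunit using 1
    rw [hYB]
    rfl
end

section
/- (Roitman) Let R be a commutative ring, (x_0,…,x_n) ∈ Um_{n+1}(R) with n ≥ 2, let 0 ≤ k ≤ n-1 and y_i ∈ R for k ≤ i ≤ n. Let I be the ideal of R generated by the 2×2 minors of the 2×(n-k+1) matrix with rows (x_k,…,x_n) and (y_k,…,y_n). If Rx_0 + ⋯ + Rx_{k-1} + I = R, then (x_0,…,x_{k-1},x_k,…,x_n) is elementarily equivalent to (x_0,…,x_{k-1},y_k,…,y_n). -/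
/-!
Write `z` for the target row and `d = z - x`. Each generator of the ideal in the hypothesis is
of the form `c ⬝ x` with `c ⬝ d = 0` (take `c = e_i` for `i < k`, and
`c = (y_j - x_j) e_i - (y_i - x_i) e_j` for the minor on columns `i, j ≥ k`), so some `c` has
`c ⬝ x = 1` and `c ⬝ d = 0`. Then `x (1 + c dᵀ) = x + d = z`, and `1 + c dᵀ ∈ E_{n+1}(R)` by
Suslin's lemma: for `m ≥ 3`, `c` unimodular and `c ⬝ d = 0`, `1 + c dᵀ` is elementary. For that,
`d = Σ h_i d_j (c_i e_j - c_j e_i)` when `c ⬝ h = 1`, which reduces it to `d = c_i e_j - c_j e_i`;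
after splitting `c` along `{i, j}` and its complement, every factor is `1 + p qᵀ` with
`q ⬝ p = 0` and `p`, `q` vanishing at a common index, and such a matrix is a commutator of
products of transvections.
-/

open Matrix Polynomial

theorem one_add_mul_one_add_mul_one_sub_mul_one_sub {A : Type*} [Ring A] {P Q : A}
    (hP : P * P = 0) (hQ : Q * Q = 0) (hQP : Q * P = 0) :
    (1 + P) * (1 + Q) * (1 - P) * (1 - Q) = 1 + P * Q := by
  simp only [mul_add, add_mul, mul_sub, sub_mul, mul_one, one_mul, mul_assoc, hP, hQ, hQP,
    mul_zero, zero_mul]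
  abel

theorem vecMulVec_single_single {R ι : Type*} [CommRing R] [DecidableEq ι] (i j : ι) (a b : R) :
    vecMulVec (Pi.single i a) (Pi.single j b) = Matrix.single i j (a * b) := by
  ext k l
  simp only [vecMulVec_apply, Pi.single_apply, Matrix.single_apply]
  grind

theorem one_add_vecMulVec_mul_one_add_vecMulVec {R ι : Type*} [CommRing R] [Fintype ι]
    [DecidableEq ι] (a b c d : ι → R) :
    (1 + vecMulVec a b) * (1 + vecMulVec c d) =
      1 + (vecMulVec a b + vecMulVec c d) + (b ⬝ᵥ c) • vecMulVec a d := by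
  simp only [mul_add, add_mul, one_mul, mul_one, vecMulVec_mul_vecMulVec, vecMulVec_smul]
  abel

theorem sum_smul_single_sub_eq {R ι : Type*} [CommRing R] [Fintype ι] [DecidableEq ι]
    {c h d : ι → R} (hch : c ⬝ᵥ h = 1) (hcd : c ⬝ᵥ d = 0) :
    ∑ ij : ι × ι,
      (c ij.1 • Pi.single ij.2 (h ij.1 * d ij.2) - c ij.2 • Pi.single ij.1 (h ij.1 * d ij.2)) =
    d := by
  rw [Fintype.sum_prod_type]
  ext l
  simp only [Finset.sum_apply, Pi.sub_apply, Pi.smul_apply, Pi.single_apply, smul_eq_mul,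
    mul_ite, mul_zero, Finset.sum_sub_distrib, Finset.sum_ite_eq, Finset.sum_ite_irrel,
    Finset.sum_const_zero, Finset.mem_univ, if_true]
  calc ∑ i, c i * (h i * d l) - ∑ j, c j * (h l * d j) = (c ⬝ᵥ h) * d l - h l * (c ⬝ᵥ d) := by
        simp only [dotProduct, Finset.sum_mul, Finset.mul_sum]
        congr 1 <;> exact Finset.sum_congr rfl fun _ _ => by ring
    _ = d l := by rw [hch, hcd]; ring

theorem exists_dotProduct_eq_one_of_span_eq_top {R ι : Type*} [CommRing R] [Fintype ι]
    (x d : ι → R) {S : Set R} (hS : ∀ a ∈ S, ∃ c : ι → R, c ⬝ᵥ x = a ∧ c ⬝ᵥ d = 0)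
    (hspan : Ideal.span S = ⊤) :
    ∃ c : ι → R, c ⬝ᵥ x = 1 ∧ c ⬝ᵥ d = 0 := by
  let B : (ι → R) →ₗ[R] (ι → R) →ₗ[R] R := dotProductBilin R R
  let J : Ideal R := (LinearMap.ker (B.flip d)).map (B.flip x)
  have hJ : Ideal.span S ≤ J := Ideal.span_le.mpr fun a ha => by
    obtain ⟨c, hcx, hcd⟩ := hS a ha
    exact ⟨c, hcd, hcx⟩
  obtain ⟨c, hcd, hcx⟩ := hJ ((Ideal.eq_top_iff_one _).mp hspan)
  exact ⟨c, hcx, hcd⟩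

namespace ElemGroup

variable {R : Type*} [CommRing R] {m : ℕ}

theorem transvection_mem {i j : Fin m} (hij : i ≠ j) (c : R) :
    transvection i j c ∈ ElemGroup R m :=
  Submonoid.subset_closure ⟨i, j, c, hij, rfl⟩

theorem one_add_vecMulVec_add_left_mem {p p' q : Fin m → R} (hqp' : q ⬝ᵥ p' = 0)
    (hp : 1 + vecMulVec p q ∈ ElemGroup R m) (hp' : 1 + vecMulVec p' q ∈ ElemGroup R m) :
    1 + vecMulVec (p + p') q ∈ ElemGroup R m := by
  have := mul_mem hp hp'
  rwa [one_add_vecMulVec_mul_one_add_vecMulVec, hqp', zero_smul, add_zero, ← add_vecMulVec]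
    at this

theorem one_add_vecMulVec_add_right_mem {p q q' : Fin m → R} (hqp : q ⬝ᵥ p = 0)
    (hq : 1 + vecMulVec p q ∈ ElemGroup R m) (hq' : 1 + vecMulVec p q' ∈ ElemGroup R m) :
    1 + vecMulVec p (q + q') ∈ ElemGroup R m := by
  have := mul_mem hq hq'
  rwa [one_add_vecMulVec_mul_one_add_vecMulVec, hqp, zero_smul, add_zero, ← vecMulVec_add]
    at this

theorem one_add_vecMulVec_sum_left_mem {ι : Type*} (s : Finset ι) (p : ι → Fin m → R)
    (q : Fin m → R) (h : ∀ l ∈ s, q ⬝ᵥ p l = 0 ∧ 1 + vecMulVec (p l) q ∈ ElemGroup R m) :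
    1 + vecMulVec (∑ l ∈ s, p l) q ∈ ElemGroup R m :=
  (Finset.sum_induction p (fun v => q ⬝ᵥ v = 0 ∧ 1 + vecMulVec v q ∈ ElemGroup R m)
    (fun _ _ hv hv' => ⟨by rw [dotProduct_add, hv.1, hv'.1, add_zero],
      one_add_vecMulVec_add_left_mem hv'.1 hv.2 hv'.2⟩)
    ⟨dotProduct_zero q, by simp⟩ h).2

theorem one_add_vecMulVec_sum_right_mem {ι : Type*} (s : Finset ι) (p : Fin m → R)
    (q : ι → Fin m → R) (h : ∀ l ∈ s, q l ⬝ᵥ p = 0 ∧ 1 + vecMulVec p (q l) ∈ ElemGroup R m) :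
    1 + vecMulVec p (∑ l ∈ s, q l) ∈ ElemGroup R m :=
  (Finset.sum_induction q (fun v => v ⬝ᵥ p = 0 ∧ 1 + vecMulVec p v ∈ ElemGroup R m)
    (fun _ _ hv hv' => ⟨by rw [add_dotProduct, hv.1, hv'.1, add_zero],
      one_add_vecMulVec_add_right_mem hv.1 hv.2 hv'.2⟩)
    ⟨zero_dotProduct p, by simp⟩ h).2

theorem one_add_vecMulVec_single_mem {p : Fin m → R} {r : Fin m} (hp : p r = 0) :
    1 + vecMulVec p (Pi.single r 1) ∈ ElemGroup R m := by
  rw [← Finset.univ_sum_single p]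
  refine one_add_vecMulVec_sum_left_mem _ _ _ fun l _ => ?_
  rcases eq_or_ne l r with rfl | hlr
  · simp [hp]
  · rw [vecMulVec_single_single, mul_one, single_dotProduct, Pi.single_eq_of_ne hlr.symm]
    exact ⟨mul_zero 1, transvection_mem hlr (p l)⟩

theorem one_add_single_vecMulVec_mem {q : Fin m → R} {r : Fin m} (hq : q r = 0) :
    1 + vecMulVec (Pi.single r 1) q ∈ ElemGroup R m := by
  rw [← Finset.univ_sum_single q]
  refine one_add_vecMulVec_sum_right_mem _ _ _ fun l _ => ?_
  rcases eq_or_ne r l with rfl | hrl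
  · simp [hq]
  · rw [vecMulVec_single_single, one_mul, single_dotProduct, Pi.single_eq_of_ne hrl.symm]
    exact ⟨mul_zero _, transvection_mem hrl (q l)⟩

theorem one_add_vecMulVec_mem_of_apply_eq_zero {p q : Fin m → R} {r : Fin m} (hp : p r = 0)
    (hq : q r = 0) (hqp : q ⬝ᵥ p = 0) :
    1 + vecMulVec p q ∈ ElemGroup R m := by
  have hPP : vecMulVec p (Pi.single r 1) * vecMulVec p (Pi.single r 1) = 0 := by
    simp [vecMulVec_mul_vecMulVec, single_dotProduct, hp]
  have hQQ : vecMulVec (Pi.single r 1) q * vecMulVec (Pi.single r 1) q = 0 := by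
    simp [vecMulVec_mul_vecMulVec, dotProduct_single, hq]
  have hQP : vecMulVec (Pi.single r 1) q * vecMulVec p (Pi.single r 1) = 0 := by
    simp [vecMulVec_mul_vecMulVec, hqp]
  have hPQ : vecMulVec p (Pi.single r (1 : R)) * vecMulVec (Pi.single r 1) q = vecMulVec p q := by
    simp [vecMulVec_mul_vecMulVec, dotProduct_single]
  rw [← hPQ, ← one_add_mul_one_add_mul_one_sub_mul_one_sub hPP hQQ hQP, sub_eq_add_neg,
    sub_eq_add_neg, ← neg_vecMulVec, ← vecMulVec_neg]
  refine mul_mem (mul_mem (mul_mem ?_ ?_) ?_) ?_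
  · exact one_add_vecMulVec_single_mem hp
  · exact one_add_single_vecMulVec_mem hq
  · exact one_add_vecMulVec_single_mem (by simp [hp])
  · exact one_add_single_vecMulVec_mem (by simp [hq])

theorem one_add_vecMulVec_smul_single_sub_mem (hm : 2 < m) (c : Fin m → R) (i j : Fin m)
    (a : R) : 1 + vecMulVec c (c i • Pi.single j a - c j • Pi.single i a) ∈ ElemGroup R m := by
  rcases eq_or_ne i j with rfl | hij
  · simp
  obtain ⟨r, hri, hrj⟩ := Fin.exists_ne_and_ne_of_two_lt i j hm
  set w : Fin m → R := c i • Pi.single j a - c j • Pi.single i a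
  have hw : ∀ v, w ⬝ᵥ v = a * (c i * v j - c j * v i) := fun v => by
    simp only [w, sub_dotProduct, smul_dotProduct, single_dotProduct, smul_eq_mul]
    ring
  set c' : Fin m → R := Pi.single i (c i) + Pi.single j (c j)
  have hc'_i : c' i = c i := by simp [c', Pi.single_eq_of_ne hij]
  have hc'_j : c' j = c j := by simp [c', Pi.single_eq_of_ne hij.symm]
  have hc'i : (c - c') i = 0 := by rw [Pi.sub_apply, hc'_i, sub_self]
  have hc'j : (c - c') j = 0 := by rw [Pi.sub_apply, hc'_j, sub_self]
  have h' : 1 + vecMulVec c' w ∈ ElemGroup R m := by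
    refine one_add_vecMulVec_mem_of_apply_eq_zero (r := r) ?_ ?_ ?_
    · simp [c', Pi.single_eq_of_ne hri, Pi.single_eq_of_ne hrj]
    · simp [w, Pi.single_eq_of_ne hri, Pi.single_eq_of_ne hrj]
    · rw [hw, hc'_i, hc'_j]
      ring
  have h'' : 1 + vecMulVec (c - c') w ∈ ElemGroup R m := by
    rw [show w = c i • Pi.single j a + -(c j • Pi.single i a) from sub_eq_add_neg _ _]
    refine one_add_vecMulVec_add_right_mem ?_ ?_ ?_
    · rw [smul_dotProduct, single_dotProduct, hc'j, mul_zero, smul_zero]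
    · refine one_add_vecMulVec_mem_of_apply_eq_zero hc'i ?_ ?_
      · simp [Pi.single_eq_of_ne hij]
      · rw [smul_dotProduct, single_dotProduct, hc'j, mul_zero, smul_zero]
    · refine one_add_vecMulVec_mem_of_apply_eq_zero hc'j ?_ ?_
      · simp [Pi.single_eq_of_ne hij.symm]
      · rw [neg_dotProduct, smul_dotProduct, single_dotProduct, hc'i, mul_zero, smul_zero,
          neg_zero]
  have := one_add_vecMulVec_add_left_mem (by rw [hw, hc'i, hc'j]; ring) h' h''
  rwa [add_sub_cancel] at this

theorem one_add_vecMulVec_mem (hm : 2 < m) {c h d : Fin m → R} (hch : c ⬝ᵥ h = 1)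
    (hcd : c ⬝ᵥ d = 0) : 1 + vecMulVec c d ∈ ElemGroup R m := by
  rw [← sum_smul_single_sub_eq hch hcd]
  refine one_add_vecMulVec_sum_right_mem _ _ _ fun ij _ => ⟨?_, ?_⟩
  · simp only [sub_dotProduct, smul_dotProduct, single_dotProduct, smul_eq_mul]
    ring
  · exact one_add_vecMulVec_smul_single_sub_mem hm c ij.1 ij.2 _

end ElemGroup

theorem stmt6_general {R : Type*} [CommRing R] {n : ℕ} (hn : 2 ≤ n)
    (x y : Fin (n + 1) → R)
    (k : ℕ)
    (hI : Ideal.span ((x '' {i : Fin (n + 1) | i.val < k}) ∪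
            {r : R | ∃ i j : Fin (n + 1), k ≤ i.val ∧ k ≤ j.val ∧
              r = x i * y j - x j * y i}) = ⊤) :
    ∃ ε ∈ ElemGroup R (n + 1),
      Matrix.vecMul x ε = fun i : Fin (n + 1) => if i.val < k then x i else y i := by
  set z : Fin (n + 1) → R := fun i => if i.val < k then x i else y i
  obtain ⟨c, hcx, hcd⟩ : ∃ c, c ⬝ᵥ x = 1 ∧ c ⬝ᵥ (z - x) = 0 := by
    refine exists_dotProduct_eq_one_of_span_eq_top x (z - x) ?_ hI
    rintro a (⟨i, hi : i.val < k, rfl⟩ | ⟨i, j, hi, hj, rfl⟩)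
    · exact ⟨Pi.single i 1, by simp, by simp [z, hi]⟩
    · refine ⟨(y j - x j) • Pi.single i 1 - (y i - x i) • Pi.single j 1, ?_, ?_⟩
      · simp only [sub_dotProduct, smul_dotProduct, single_dotProduct, smul_eq_mul]
        ring
      · simp only [sub_dotProduct, smul_dotProduct, single_dotProduct, smul_eq_mul,
          Pi.sub_apply, z, if_neg (not_lt.mpr hi), if_neg (not_lt.mpr hj)]
        ring
  refine ⟨1 + vecMulVec c (z - x), ElemGroup.one_add_vecMulVec_mem (by omega) hcx hcd, ?_⟩
  rw [vecMul_add, vecMul_one, vecMul_vecMulVec, dotProduct_comm, hcx, one_smul, add_sub_cancel]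

/-- Roitman: let `(x_0, …, x_n)` be a unimodular row, `0 ≤ k ≤ n - 1`,
`y_i ∈ R` for `k ≤ i ≤ n`, and let `I` be the ideal generated by the `2×2` minors of the
matrix with rows `(x_k, …, x_n)` and `(y_k, …, y_n)`.  If `Rx_0 + ⋯ + Rx_{k-1} + I = R`
then `(x_0, …, x_n) ~_E (x_0, …, x_{k-1}, y_k, …, y_n)`. -/
theorem stmt6 {R : Type*} [CommRing R] [Nontrivial R] {n : ℕ} (hn : 2 ≤ n)
    (x y : Fin (n + 1) → R)
    (hx : ∃ b : Fin (n + 1) → R, ∑ i, x i * b i = 1)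
    (k : ℕ) (hk : k ≤ n - 1)
    (hI : Ideal.span ((x '' {i : Fin (n + 1) | i.val < k}) ∪
            {r : R | ∃ i j : Fin (n + 1), k ≤ i.val ∧ k ≤ j.val ∧
              r = x i * y j - x j * y i}) = ⊤) :
    ∃ ε ∈ ElemGroup R (n + 1),
      Matrix.vecMul x ε = fun i : Fin (n + 1) => if i.val < k then x i else y i :=
  stmt6_general hn x y k hI
end

section
/- Let R be a commutative local ring, m ≥ n ≥ 1, and V ∈ SpUm_{2n,2m}(R). Then V is completable to an elementary symplectic matrix: there exists W ∈ ESp_{2m}(R) whose first 2n rows equal V. -/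
/-!
Induct on `k`: right multiplication by `ESp_{2m}(R)` brings the first `2k` rows of `V` to
`e_0, …, e_{2k-1}`. Since `V ψ Vᵀ = ψ`, the remaining rows are `ψ`-orthogonal to these, hence
vanish in the first `2k` columns. Row `2k` is unimodular, so over a local ring it has a unit
entry, and transvections `se_ij` with `i, σ j ≥ 2k` (which fix `e_0, …, e_{2k-1}`) carry it
to `e_{2k}`. Orthogonality then forces entry `2k+1` of row `2k+1` to be `1`, and transvections
also fixing `e_{2k}` carry that row to `e_{2k+1}`. At `k = n` we get `V E = [I 0]`, so
`W = E⁻¹` works.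
-/

open Matrix Polynomial

/-- The permutation `σ` of the indices `{0, …, 2m-1}` (0-indexed) pairing `2i ↔ 2i+1`. -/
def sigmaPerm (m : ℕ) (i : Fin (2 * m)) : Fin (2 * m) :=
  if h : i.val % 2 = 0 then ⟨i.val + 1, by have := i.isLt; omega⟩
  else ⟨i.val - 1, by have := i.isLt; omega⟩

/-- The standard alternating form `ψ_m = ψ_1 ⊥ ⋯ ⊥ ψ_1`, where `ψ_1 = [[0,1],[-1,0]]`. -/
def psiMat (R : Type*) [CommRing R] (m : ℕ) : Matrix (Fin (2 * m)) (Fin (2 * m)) R :=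
  Matrix.of fun i j =>
    if i.val % 2 = 0 ∧ j.val = i.val + 1 then 1
    else if j.val % 2 = 0 ∧ i.val = j.val + 1 then -1
    else 0

/-- `A` is a symplectic `2m × 2m` matrix: `Aᵀ ψ_m A = ψ_m`. -/
def IsSymplectic {R : Type*} [CommRing R] {m : ℕ} (A : Matrix (Fin (2 * m)) (Fin (2 * m)) R) :
    Prop :=
  Aᵀ * psiMat R m * A = psiMat R m

/-- The elementary symplectic matrix `se_ij(z)`. -/
def sympE {R : Type*} [CommRing R] (m : ℕ) (i j : Fin (2 * m)) (z : R) :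
    Matrix (Fin (2 * m)) (Fin (2 * m)) R :=
  if i = sigmaPerm m j then 1 + Matrix.single i j z
  else 1 + Matrix.single i j z -
    (-1 : R) ^ (i.val + j.val) • Matrix.single (sigmaPerm m j) (sigmaPerm m i) z

/-- `ESpGroup R m` is the elementary symplectic group `ESp_{2m}(R)` generated by the
matrices `se_ij(z)`, `i ≠ j` (realised as the multiplicative closure; every generator's
inverse is again a generator). -/
def ESpGroup (R : Type*) [CommRing R] (m : ℕ) :
    Submonoid (Matrix (Fin (2 * m)) (Fin (2 * m)) R) :=
  Submonoid.closure {A | ∃ (i j : Fin (2 * m)) (z : R), i ≠ j ∧ A = sympE m i j z}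

section Sigma

variable {m : ℕ}

lemma sigmaPerm_val (i : Fin (2 * m)) :
    (sigmaPerm m i : ℕ) = if (i : ℕ) % 2 = 0 then (i : ℕ) + 1 else (i : ℕ) - 1 := by
  unfold sigmaPerm; split <;> rfl

@[simp]
lemma sigmaPerm_sigmaPerm (i : Fin (2 * m)) : sigmaPerm m (sigmaPerm m i) = i := by
  ext; simp only [sigmaPerm_val]; split_ifs <;> omega

lemma sigmaPerm_injective : Function.Injective (sigmaPerm m) :=
  Function.LeftInverse.injective sigmaPerm_sigmaPerm

@[simp]
lemma sigmaPerm_inj {i j : Fin (2 * m)} : sigmaPerm m i = sigmaPerm m j ↔ i = j :=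
  sigmaPerm_injective.eq_iff

lemma eq_sigmaPerm_comm {i j : Fin (2 * m)} : i = sigmaPerm m j ↔ j = sigmaPerm m i := by
  constructor <;> rintro rfl <;> simp

@[simp]
lemma sigmaPerm_ne_self (i : Fin (2 * m)) : sigmaPerm m i ≠ i := by
  intro h; have := congrArg Fin.val h; rw [sigmaPerm_val] at this; split_ifs at this <;> omega

@[simp]
lemma self_ne_sigmaPerm (i : Fin (2 * m)) : i ≠ sigmaPerm m i := (sigmaPerm_ne_self i).symm

lemma neg_one_pow_sigmaPerm {R : Type*} [Ring R] (i : Fin (2 * m)) :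
    (-1 : R) ^ (sigmaPerm m i : ℕ) = -(-1) ^ (i : ℕ) := by
  rw [sigmaPerm_val]
  split_ifs with h
  · rw [pow_succ, mul_neg_one]
  · obtain ⟨k, hk⟩ : ∃ k, (i : ℕ) = k + 1 := ⟨i - 1, by omega⟩
    rw [hk, Nat.add_sub_cancel, pow_succ, mul_neg_one, neg_neg]

lemma le_sigmaPerm_iff {r : ℕ} (hr : r % 2 = 0) (i : Fin (2 * m)) :
    r ≤ (sigmaPerm m i : ℕ) ↔ r ≤ i := by
  rw [sigmaPerm_val]; split_ifs <;> omega

lemma sigmaPerm_val_of_even {i : Fin (2 * m)} (hi : (i : ℕ) % 2 = 0) :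
    (sigmaPerm m i : ℕ) = i + 1 := by
  rw [sigmaPerm_val, if_pos hi]

lemma sigmaPerm_castLE {n : ℕ} (h : 2 * n ≤ 2 * m) (i : Fin (2 * n)) :
    sigmaPerm m (Fin.castLE h i) = Fin.castLE h (sigmaPerm n i) := by
  ext; simp only [Fin.val_castLE, sigmaPerm_val]

end Sigma

lemma psiMat_apply {R : Type*} [CommRing R] {m : ℕ} (k l : Fin (2 * m)) :
    psiMat R m k l = if l = sigmaPerm m k then (-1) ^ (k : ℕ) else 0 := by
  simp only [psiMat, of_apply, Fin.ext_iff, sigmaPerm_val]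
  have hk := Nat.mod_two_eq_zero_or_one k
  split_ifs with h1 <;> first
    | omega
    | rw [(Nat.even_iff.mpr h1.1).neg_one_pow]
    | rw [(Nat.odd_iff.mpr (by omega)).neg_one_pow]
    | rfl

lemma vecMul_single_eq {α ι : Type*} [Semiring α] [Fintype ι] [DecidableEq ι] (u : ι → α)
    (a b : ι) (c : α) : u ᵥ* Matrix.single a b c = Pi.single b (u a * c) := by
  ext x
  simp [vecMul, dotProduct, Matrix.single, Pi.single_apply, eq_comm, ite_and]

section Form

variable {R : Type*} [CommRing R] {m : ℕ}

lemma vecMul_sympE (i j : Fin (2 * m)) (z : R) (u : Fin (2 * m) → R) :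
    u ᵥ* sympE m i j z = u + Pi.single j (u i * z) - Pi.single (sigmaPerm m i)
      (if i = sigmaPerm m j then 0 else (-1) ^ ((i : ℕ) + j) * z * u (sigmaPerm m j)) := by
  unfold sympE
  split_ifs
  · simp [vecMul_add, vecMul_single_eq]
  · simp [vecMul_add, vecMul_sub, vecMul_single_eq, smul_single, mul_comm, mul_left_comm]

def sympForm (u v : Fin (2 * m) → R) : R := u ⬝ᵥ (psiMat R m *ᵥ v)

lemma psiMat_mulVec_apply (v : Fin (2 * m) → R) (l : Fin (2 * m)) :
    (psiMat R m *ᵥ v) l = (-1) ^ (l : ℕ) * v (sigmaPerm m l) := by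
  simp [mulVec, dotProduct, psiMat_apply, ite_mul]

lemma sympForm_single_left (l : Fin (2 * m)) (c : R) (v : Fin (2 * m) → R) :
    sympForm (Pi.single l c) v = c * (-1) ^ (l : ℕ) * v (sigmaPerm m l) := by
  rw [sympForm, single_dotProduct, psiMat_mulVec_apply, mul_assoc]

lemma sympForm_single_right (u : Fin (2 * m) → R) (l : Fin (2 * m)) (c : R) :
    sympForm u (Pi.single l c) = -(u (sigmaPerm m l) * (-1) ^ (l : ℕ) * c) := by
  have h : ∀ k, sigmaPerm m k = l ↔ k = sigmaPerm m l := fun k => by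
    rw [eq_comm, eq_sigmaPerm_comm]
  simp [sympForm, dotProduct, psiMat_mulVec_apply, Pi.single_apply, h, neg_one_pow_sigmaPerm]
  ring

lemma sympForm_add_left (u u' v : Fin (2 * m) → R) :
    sympForm (u + u') v = sympForm u v + sympForm u' v := add_dotProduct _ _ _

lemma sympForm_sub_left (u u' v : Fin (2 * m) → R) :
    sympForm (u - u') v = sympForm u v - sympForm u' v := sub_dotProduct _ _ _

lemma sympForm_add_right (u v v' : Fin (2 * m) → R) :
    sympForm u (v + v') = sympForm u v + sympForm u v' := by
  rw [sympForm, mulVec_add, dotProduct_add]; rfl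

lemma sympForm_sub_right (u v v' : Fin (2 * m) → R) :
    sympForm u (v - v') = sympForm u v - sympForm u v' := by
  rw [sympForm, mulVec_sub, dotProduct_sub]; rfl

lemma sympForm_vecMul_sympE {i j : Fin (2 * m)} (hij : i ≠ j) (z : R) (u v : Fin (2 * m) → R) :
    sympForm (u ᵥ* sympE m i j z) (v ᵥ* sympE m i j z) = sympForm u v := by
  have hσ : sigmaPerm m j ≠ sigmaPerm m i := by simpa using hij.symm
  simp only [vecMul_sympE, sympForm_add_left, sympForm_sub_left, sympForm_add_right,
    sympForm_sub_right, sympForm_single_left, sympForm_single_right, Pi.add_apply, Pi.sub_apply,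
    Pi.single_apply, sigmaPerm_sigmaPerm, sigmaPerm_ne_self, hσ, hij, self_ne_sigmaPerm, if_false]
  split_ifs with h
  · subst h; ring
  · have hsq : ((-1 : R) ^ (i : ℕ)) ^ 2 = 1 := by rw [← pow_mul, mul_comm, pow_mul]; simp
    -- the cross terms cancel because `(-1) ^ (i + j) * (-1) ^ (σ i) = -(-1) ^ j`
    rw [neg_one_pow_sigmaPerm, pow_add]
    linear_combination
      (-1 : R) ^ (j : ℕ) * z * (u (sigmaPerm m j) * v i - u i * v (sigmaPerm m j)) * hsq

end Form

section Elementary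

variable {R : Type*} [CommRing R] {m : ℕ}

lemma mul_psiMat_mul_transpose_apply {ι κ : Type*} (A : Matrix ι (Fin (2 * m)) R)
    (B : Matrix κ (Fin (2 * m)) R) (x : ι) (y : κ) :
    (A * psiMat R m * Bᵀ) x y = sympForm (A x) (B y) := by
  rw [sympForm, dotProduct_mulVec]; rfl

lemma sympE_mul_psiMat_mul_transpose {i j : Fin (2 * m)} (hij : i ≠ j) (z : R) :
    sympE m i j z * psiMat R m * (sympE m i j z)ᵀ = psiMat R m := by
  let I : Matrix (Fin (2 * m)) (Fin (2 * m)) R := 1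
  have hrow : ∀ x, sympE m i j z x = I x ᵥ* sympE m i j z :=
    fun x => by rw [← mul_apply_eq_vecMul, one_mul]
  ext x y
  calc (sympE m i j z * psiMat R m * (sympE m i j z)ᵀ) x y
      = sympForm (I x) (I y) := by
        rw [mul_psiMat_mul_transpose_apply, hrow, hrow, sympForm_vecMul_sympE hij]
    _ = psiMat R m x y := by
        rw [← mul_psiMat_mul_transpose_apply]; simp [I]

lemma vecMul_sympE_of_eq_sigmaPerm {i j : Fin (2 * m)} (h : i = sigmaPerm m j) (z : R)
    (u : Fin (2 * m) → R) : u ᵥ* sympE m i j z = u + Pi.single j (u i * z) := by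
  rw [vecMul_sympE, if_pos h, Pi.single_zero, sub_zero]

lemma vecMul_sympE_apply_self (i j : Fin (2 * m)) (z : R) (u : Fin (2 * m) → R) :
    (u ᵥ* sympE m i j z) j = u j + u i * z := by
  rw [vecMul_sympE]
  by_cases h : j = sigmaPerm m i
  · simp [eq_sigmaPerm_comm.mp h]
  · simp [h]

lemma vecMul_sympE_apply_of_ne {i j c : Fin (2 * m)} (hj : c ≠ j) (hi : c ≠ sigmaPerm m i)
    (z : R) (u : Fin (2 * m) → R) : (u ᵥ* sympE m i j z) c = u c := by
  simp [vecMul_sympE, hj, hi]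

lemma vecMul_sympE_vecMul_sympE_neg {i j : Fin (2 * m)} (hij : i ≠ j) (z : R)
    (u : Fin (2 * m) → R) : u ᵥ* sympE m i j z ᵥ* sympE m i j (-z) = u := by
  have hσ : sigmaPerm m j ≠ sigmaPerm m i := by simpa using hij.symm
  have hi := vecMul_sympE_apply_of_ne hij (self_ne_sigmaPerm i) z u
  have hj := vecMul_sympE_apply_of_ne (sigmaPerm_ne_self j) hσ z u
  rw [vecMul_sympE _ _ _ (u ᵥ* _), hi, hj, vecMul_sympE]
  ext c
  split_ifs <;> simp only [Pi.add_apply, Pi.sub_apply, Pi.single_apply] <;> split_ifs <;> ring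

lemma sympE_mul_sympE_neg {i j : Fin (2 * m)} (hij : i ≠ j) (z : R) :
    sympE m i j z * sympE m i j (-z) = 1 := by
  rw [ext_iff_vecMul]
  intro u
  rw [← vecMul_vecMul, vecMul_sympE_vecMul_sympE_neg hij, vecMul_one]

end Elementary

namespace ESpGroup

variable {R : Type*} [CommRing R] {m : ℕ}

lemma sympE_mem {i j : Fin (2 * m)} (hij : i ≠ j) (z : R) : sympE m i j z ∈ ESpGroup R m :=
  Submonoid.subset_closure ⟨i, j, z, hij, rfl⟩

lemma mul_psiMat_mul_transpose {E : Matrix (Fin (2 * m)) (Fin (2 * m)) R}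
    (hE : E ∈ ESpGroup R m) : E * psiMat R m * Eᵀ = psiMat R m := by
  induction hE using Submonoid.closure_induction with
  | mem x hx =>
    obtain ⟨i, j, z, hij, rfl⟩ := hx
    exact sympE_mul_psiMat_mul_transpose hij z
  | one => simp
  | mul x y _ _ hx hy =>
    rw [transpose_mul,
      show x * y * psiMat R m * (yᵀ * xᵀ) = x * (y * psiMat R m * yᵀ) * xᵀ by
        simp only [Matrix.mul_assoc], hy, hx]

lemma exists_mul_eq_one {E : Matrix (Fin (2 * m)) (Fin (2 * m)) R} (hE : E ∈ ESpGroup R m) :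
    ∃ F ∈ ESpGroup R m, E * F = 1 := by
  induction hE using Submonoid.closure_induction with
  | mem x hx =>
    obtain ⟨i, j, z, hij, rfl⟩ := hx
    exact ⟨_, sympE_mem hij (-z), sympE_mul_sympE_neg hij z⟩
  | one => exact ⟨1, one_mem _, Matrix.mul_one 1⟩
  | mul x y _ _ hx hy =>
    obtain ⟨F, hF, hxF⟩ := hx
    obtain ⟨G, hG, hyG⟩ := hy
    refine ⟨G * F, mul_mem hG hF, ?_⟩
    rw [Matrix.mul_assoc, ← Matrix.mul_assoc y, hyG, Matrix.one_mul, hxF]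

end ESpGroup

def ESpStab (R : Type*) [CommRing R] (m r : ℕ) :
    Submonoid (Matrix (Fin (2 * m)) (Fin (2 * m)) R) where
  carrier := {E | E ∈ ESpGroup R m ∧
    ∀ a : Fin (2 * m), (a : ℕ) < r → Pi.single a 1 ᵥ* E = Pi.single a 1}
  mul_mem' := by
    rintro E F ⟨hE, hEa⟩ ⟨hF, hFa⟩
    exact ⟨mul_mem hE hF, fun a ha => by rw [← vecMul_vecMul, hEa a ha, hFa a ha]⟩
  one_mem' := ⟨one_mem _, fun _ _ => vecMul_one _⟩

section Stab

variable {R : Type*} [CommRing R] {m : ℕ}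

lemma ESpStab_antitone : Antitone (ESpStab R m) :=
  fun _ _ h _ hE => ⟨hE.1, fun a ha => hE.2 a (ha.trans_le h)⟩

lemma sympE_mem_ESpStab {r : ℕ} {i j : Fin (2 * m)} (hij : i ≠ j) (hi : r ≤ i)
    (hj : r ≤ sigmaPerm m j) (z : R) : sympE m i j z ∈ ESpStab R m r := by
  refine ⟨ESpGroup.sympE_mem hij z, fun a ha => ?_⟩
  have hai : a ≠ i := fun h => by omega
  have haj : a ≠ sigmaPerm m j := fun h => by subst h; omega
  rw [vecMul_sympE, Pi.single_eq_of_ne hai.symm, Pi.single_eq_of_ne haj.symm]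
  simp

lemma mul_apply_of_mem_ESpStab {ι : Type*} {r : ℕ} {V : Matrix ι (Fin (2 * m)) R}
    {E : Matrix (Fin (2 * m)) (Fin (2 * m)) R} (hE : E ∈ ESpStab R m r) {i : ι} {c : Fin (2 * m)}
    (hc : (c : ℕ) < r) (hi : V i = Pi.single c 1) : (V * E) i = Pi.single c 1 := by
  rw [mul_apply_eq_vecMul, hi, hE.2 c hc]

end Stab

section RowReduction

variable {R : Type*} [CommRing R] {m : ℕ} {p : Fin (2 * m)}

lemma exists_ESpStab_clear_entries (hp : (p : ℕ) % 2 = 0) (S : Finset (Fin (2 * m)))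
    (hS : ∀ c ∈ S, (p : ℕ) + 1 < c) (u : Fin (2 * m) → R) (hu : u (sigmaPerm m p) = 1) :
    ∃ E ∈ ESpStab R m (p + 1), (∀ c ∈ S, (u ᵥ* E) c = 0) ∧
      ∀ c ∉ S, c ≠ p → (u ᵥ* E) c = u c := by
  have hq : (sigmaPerm m p : ℕ) = p + 1 := sigmaPerm_val_of_even hp
  induction S using Finset.induction_on generalizing u with
  | empty => exact ⟨1, one_mem _, by simp, by simp⟩
  | insert c S hcS ih =>
    have hc : (p : ℕ) + 1 < c := hS c (Finset.mem_insert_self c S)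
    have hqc : sigmaPerm m p ≠ c := fun h => by rw [← h] at hc; omega
    have hσc : (p : ℕ) + 1 ≤ sigmaPerm m c := by
      have := (le_sigmaPerm_iff (r := p + 2) (by omega) c).mpr hc; omega
    set G := sympE m (sigmaPerm m p) c (-u c)
    have hG : G ∈ ESpStab R m (p + 1) := sympE_mem_ESpStab hqc hq.ge hσc _
    have hGc : (u ᵥ* G) c = 0 := by rw [vecMul_sympE_apply_self, hu]; ring
    have hGd : ∀ d, d ≠ c → d ≠ p → (u ᵥ* G) d = u d := fun d hdc hdp =>
      vecMul_sympE_apply_of_ne hdc (by rwa [sigmaPerm_sigmaPerm]) _ _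
    obtain ⟨E, hE, hES, hEkeep⟩ :=
      ih (fun d hd => hS d (Finset.mem_insert_of_mem hd)) (u ᵥ* G)
        (by rw [hGd _ hqc (sigmaPerm_ne_self p), hu])
    refine ⟨G * E, mul_mem hG hE, fun d hd => ?_, fun d hd hdp => ?_⟩
    · rw [← vecMul_vecMul]
      rcases Finset.mem_insert.mp hd with rfl | hd
      · rw [hEkeep d hcS (fun h => by rw [h] at hc; omega), hGc]
      · exact hES d hd
    · rw [← vecMul_vecMul, hEkeep d (fun h => hd (Finset.mem_insert_of_mem h)) hdp,
        hGd d (fun h => hd (h ▸ Finset.mem_insert_self c S)) hdp]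

lemma exists_ESpStab_vecMul_eq_single_sigmaPerm (hp : (p : ℕ) % 2 = 0) (u : Fin (2 * m) → R)
    (hu : u (sigmaPerm m p) = 1) (hlow : ∀ c : Fin (2 * m), (c : ℕ) < p → u c = 0) :
    ∃ E ∈ ESpStab R m (p + 1), u ᵥ* E = Pi.single (sigmaPerm m p) 1 := by
  have hq : (sigmaPerm m p : ℕ) = p + 1 := sigmaPerm_val_of_even hp
  obtain ⟨E, hE, hES, hEkeep⟩ :=
    exists_ESpStab_clear_entries hp {c | (p : ℕ) + 1 < c} (by simp) u hu
  have hw : ∀ c, c ≠ p →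
      (u ᵥ* E) c = (Pi.single (sigmaPerm m p) 1 : Fin (2 * m) → R) c := by
    intro c hcp
    have hcp' : (c : ℕ) ≠ p := Fin.val_ne_of_ne hcp
    rcases lt_trichotomy (c : ℕ) (p + 1) with h | h | h
    · have hcq : c ≠ sigmaPerm m p := fun h' => by rw [h'] at h; omega
      rw [hEkeep c (by simp; omega) hcp, hlow c (by omega), Pi.single_eq_of_ne hcq]
    · obtain rfl : c = sigmaPerm m p := Fin.ext (h.trans hq.symm)
      rw [hEkeep _ (by simp; omega) hcp, hu, Pi.single_eq_same]
    · have hcq : c ≠ sigmaPerm m p := fun h' => by rw [h'] at h; omega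
      rw [hES c (by simpa using h), Pi.single_eq_of_ne hcq]
  refine ⟨E * sympE m (sigmaPerm m p) p (-(u ᵥ* E) p),
    mul_mem hE (sympE_mem_ESpStab (sigmaPerm_ne_self p) hq.ge hq.ge _), ?_⟩
  rw [← vecMul_vecMul]
  ext c
  by_cases hcp : c = p
  · subst hcp
    rw [vecMul_sympE_apply_self, hw _ (sigmaPerm_ne_self c), Pi.single_eq_same,
      Pi.single_eq_of_ne (self_ne_sigmaPerm c)]
    ring
  · rw [vecMul_sympE_apply_of_ne hcp (by rwa [sigmaPerm_sigmaPerm]), hw c hcp]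

lemma exists_ESpStab_vecMul_apply_eq_one (hp : (p : ℕ) % 2 = 0) (u : Fin (2 * m) → R)
    (hlow : ∀ c : Fin (2 * m), (c : ℕ) < p → u c = 0) {a j : Fin (2 * m)} (haj : a ≠ j)
    (hpa : (p : ℕ) ≤ a) (hpj : (p : ℕ) ≤ j) (ha : IsUnit (u a)) :
    ∃ E ∈ ESpStab R m p, (u ᵥ* E) j = 1 ∧
      ∀ c : Fin (2 * m), (c : ℕ) < p → (u ᵥ* E) c = 0 := by
  refine ⟨sympE m a j (↑ha.unit⁻¹ * (1 - u j)),
    sympE_mem_ESpStab haj hpa ((le_sigmaPerm_iff hp j).mpr hpj) _, ?_, fun c hc => ?_⟩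
  · rw [vecMul_sympE_apply_self, ← mul_assoc, ha.mul_val_inv, one_mul, add_sub_cancel]
  · have hcj : c ≠ j := fun h => by rw [h] at hc; omega
    have hca : c ≠ sigmaPerm m a := fun h => by
      have := (le_sigmaPerm_iff hp a).mpr hpa; rw [← h] at this; omega
    rw [vecMul_sympE_apply_of_ne hcj hca, hlow c hc]

lemma exists_ESpStab_vecMul_eq_single [Nontrivial R] (hp : (p : ℕ) % 2 = 0)
    (u : Fin (2 * m) → R) (hlow : ∀ c : Fin (2 * m), (c : ℕ) < p → u c = 0)
    (hunit : ∃ a, IsUnit (u a)) : ∃ E ∈ ESpStab R m p, u ᵥ* E = Pi.single p 1 := by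
  have hq : (sigmaPerm m p : ℕ) = p + 1 := sigmaPerm_val_of_even hp
  obtain ⟨a, ha⟩ := hunit
  have hpa : (p : ℕ) ≤ a := by
    by_contra h
    exact not_isUnit_zero (hlow a (by omega) ▸ ha)
  obtain ⟨E₀, hE₀, hu₀, hlow₀⟩ : ∃ E ∈ ESpStab R m p, IsUnit ((u ᵥ* E) p) ∧
      ∀ c : Fin (2 * m), (c : ℕ) < p → (u ᵥ* E) c = 0 := by
    by_cases hap : a = p
    · exact ⟨1, one_mem _, by rwa [vecMul_one, ← hap], by simpa using hlow⟩
    · obtain ⟨E, hE, hEp, hElow⟩ :=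
        exists_ESpStab_vecMul_apply_eq_one hp u hlow hap hpa le_rfl ha
      exact ⟨E, hE, hEp ▸ isUnit_one, hElow⟩
  obtain ⟨E₁, hE₁, hu₁, hlow₁⟩ := exists_ESpStab_vecMul_apply_eq_one hp _ hlow₀
    (self_ne_sigmaPerm p) le_rfl (by omega) hu₀
  obtain ⟨E₂, hE₂, hu₂⟩ := exists_ESpStab_vecMul_eq_single_sigmaPerm hp _ hu₁ hlow₁
  have hswap : Pi.single (sigmaPerm m p) 1 ᵥ* sympE m (sigmaPerm m p) p 1 ᵥ*
      sympE m p (sigmaPerm m p) (-1) = (Pi.single p 1 : Fin (2 * m) → R) := by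
    rw [vecMul_sympE_of_eq_sigmaPerm rfl, vecMul_sympE_of_eq_sigmaPerm (sigmaPerm_sigmaPerm p).symm]
    simp only [Pi.add_apply, Pi.single_eq_same, Pi.single_eq_of_ne (self_ne_sigmaPerm p)]
    rw [zero_add, one_mul, mul_neg_one, add_right_comm, ← Pi.single_add, add_neg_cancel,
      Pi.single_zero, zero_add]
  refine ⟨E₀ * E₁ * E₂ * (sympE m (sigmaPerm m p) p 1 * sympE m p (sigmaPerm m p) (-1)),
    mul_mem (mul_mem (mul_mem hE₀ hE₁) (ESpStab_antitone (Nat.le_succ _) hE₂))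
      (mul_mem (sympE_mem_ESpStab (sigmaPerm_ne_self p) (by omega) (by omega) _)
        (sympE_mem_ESpStab (self_ne_sigmaPerm p) le_rfl (by simp) _)), ?_⟩
  simp only [← vecMul_vecMul, hu₂, hswap]

end RowReduction

lemma exists_isUnit_apply_of_mul_eq_one {R ι κ : Type*} [CommRing R] [IsLocalRing R]
    [Fintype κ] [DecidableEq ι] {V : Matrix ι κ R} {B : Matrix κ ι R} (hB : V * B = 1)
    (i : ι) : ∃ c, IsUnit (V i c) := by
  have h1 : IsUnit (∑ c, V i c * B c i) := by
    rw [← mul_apply, hB, one_apply_eq]; exact isUnit_one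
  obtain ⟨c, -, hc⟩ := IsLocalRing.exists_of_isUnit_sum h1
  exact ⟨c, isUnit_of_mul_isUnit_left hc⟩

section Unimodular

variable {R : Type*} [CommRing R] {n m : ℕ} {V : Matrix (Fin (2 * n)) (Fin (2 * m)) R}

lemma mul_psiMat_mul_transpose_of_mem_ESpGroup (hVsp : V * psiMat R m * Vᵀ = psiMat R n)
    {E : Matrix (Fin (2 * m)) (Fin (2 * m)) R} (hE : E ∈ ESpGroup R m) :
    V * E * psiMat R m * (V * E)ᵀ = psiMat R n := by
  rw [transpose_mul, show V * E * psiMat R m * (Eᵀ * Vᵀ) = V * (E * psiMat R m * Eᵀ) * Vᵀ by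
    simp only [Matrix.mul_assoc], ESpGroup.mul_psiMat_mul_transpose hE, hVsp]

lemma psiMat_apply_eq_of_row_eq_single (hVsp : V * psiMat R m * Vᵀ = psiMat R n)
    {a : Fin (2 * n)} {c : Fin (2 * m)}
    (ha : V a = Pi.single c 1) (b : Fin (2 * n)) :
    psiMat R n a b = (-1) ^ (c : ℕ) * V b (sigmaPerm m c) := by
  rw [← hVsp, mul_psiMat_mul_transpose_apply, ha, sympForm_single_left, one_mul]

/-- Rows `i ≥ 2k` are `ψ`-orthogonal to the standard rows `e_0, …, e_{2k-1}`, which forces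
their first `2k` entries to vanish. -/
lemma apply_eq_zero_of_rows_eq_single (h : 2 * n ≤ 2 * m)
    (hVsp : V * psiMat R m * Vᵀ = psiMat R n) {k : ℕ}
    (hrows : ∀ i : Fin (2 * n), (i : ℕ) < 2 * k → V i = Pi.single (Fin.castLE h i) 1)
    {i : Fin (2 * n)} (hi : 2 * k ≤ i) {c : Fin (2 * m)} (hc : (c : ℕ) < 2 * k) :
    V i c = 0 := by
  have hσc : (sigmaPerm m c : ℕ) < 2 * k :=
    not_le.mp fun h' => absurd ((le_sigmaPerm_iff (by omega) c).mp h') (by omega)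
  let a : Fin (2 * n) := ⟨sigmaPerm m c, by omega⟩
  have hσa : (sigmaPerm n a : ℕ) = c := by
    rw [← Fin.val_castLE h, ← sigmaPerm_castLE, show Fin.castLE h a = sigmaPerm m c from rfl,
      sigmaPerm_sigmaPerm]
  have hψ : psiMat R n a i = 0 := by
    rw [psiMat_apply, if_neg fun h' => by rw [h'] at hi; omega]
  have ha : V a = Pi.single (sigmaPerm m c) 1 := hrows a hσc
  have key := psiMat_apply_eq_of_row_eq_single hVsp ha i
  rw [hψ, sigmaPerm_sigmaPerm] at key
  exact ((isUnit_neg_one.pow _).mul_right_eq_zero).mp key.symm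

lemma exists_ESpStab_rows_eq_single_succ [IsLocalRing R] (h : 2 * n ≤ 2 * m)
    (hVinv : ∃ B : Matrix (Fin (2 * m)) (Fin (2 * n)) R, V * B = 1)
    (hVsp : V * psiMat R m * Vᵀ = psiMat R n) {k : ℕ} (hk : k < n)
    (hrows : ∀ i : Fin (2 * n), (i : ℕ) < 2 * k → V i = Pi.single (Fin.castLE h i) 1) :
    ∃ E ∈ ESpStab R m (2 * k), ∀ i : Fin (2 * n), (i : ℕ) < 2 * (k + 1) →
      (V * E) i = Pi.single (Fin.castLE h i) 1 := by
  let p : Fin (2 * m) := ⟨2 * k, by omega⟩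
  have hp : (p : ℕ) % 2 = 0 := Nat.mul_mod_right 2 k
  let pr : Fin (2 * n) := ⟨2 * k, by omega⟩
  let qr : Fin (2 * n) := ⟨2 * k + 1, by omega⟩
  obtain ⟨B, hB⟩ := hVinv
  obtain ⟨E₁, hE₁, hpr⟩ := exists_ESpStab_vecMul_eq_single hp (V pr)
    (fun c hc => apply_eq_zero_of_rows_eq_single h hVsp hrows le_rfl hc)
    (exists_isUnit_apply_of_mul_eq_one hB pr)
  have hV₁sp := mul_psiMat_mul_transpose_of_mem_ESpGroup hVsp hE₁.1
  have hrows₁ : ∀ i : Fin (2 * n), (i : ℕ) < 2 * k + 1 →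
      (V * E₁) i = Pi.single (Fin.castLE h i) 1 := by
    intro i hi
    by_cases hik : (i : ℕ) < 2 * k
    · exact mul_apply_of_mem_ESpStab hE₁ hik (hrows i hik)
    · obtain rfl : i = pr := Fin.ext (show (i : ℕ) = 2 * k by omega)
      exact hpr
  have hq : (V * E₁) qr (sigmaPerm m p) = 1 := by
    have key := psiMat_apply_eq_of_row_eq_single hV₁sp (a := pr) hpr qr
    rwa [psiMat_apply, if_pos (Fin.ext (sigmaPerm_val_of_even (i := pr) hp).symm),
      (Nat.even_iff.mpr hp).neg_one_pow, one_mul, eq_comm] at key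
  obtain ⟨E₂, hE₂, hqr⟩ := exists_ESpStab_vecMul_eq_single_sigmaPerm hp _ hq
    fun c hc => apply_eq_zero_of_rows_eq_single h hV₁sp (fun i hi => hrows₁ i (by omega))
      (by simp [qr]) hc
  refine ⟨E₁ * E₂, mul_mem hE₁ (ESpStab_antitone (Nat.le_succ _) hE₂), fun i hi => ?_⟩
  rw [← Matrix.mul_assoc]
  by_cases hi' : (i : ℕ) < 2 * k + 1
  · exact mul_apply_of_mem_ESpStab hE₂ hi' (hrows₁ i hi')
  · obtain rfl : i = qr := Fin.ext (show (i : ℕ) = 2 * k + 1 by omega)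
    rw [mul_apply_eq_vecMul, hqr]
    congr 1
    exact Fin.ext (sigmaPerm_val_of_even hp)

lemma exists_ESpGroup_rows_eq_single [IsLocalRing R] (h : 2 * n ≤ 2 * m)
    (hVinv : ∃ B : Matrix (Fin (2 * m)) (Fin (2 * n)) R, V * B = 1)
    (hVsp : V * psiMat R m * Vᵀ = psiMat R n) {k : ℕ} (hk : k ≤ n) :
    ∃ E ∈ ESpGroup R m, ∀ i : Fin (2 * n), (i : ℕ) < 2 * k →
      (V * E) i = Pi.single (Fin.castLE h i) 1 := by
  induction k with
  | zero => exact ⟨1, one_mem _, fun i hi => absurd hi (Nat.not_lt_zero _)⟩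
  | succ k ih =>
    obtain ⟨E, hE, hrows⟩ := ih (by omega)
    obtain ⟨F, -, hEF⟩ := ESpGroup.exists_mul_eq_one hE
    obtain ⟨B, hB⟩ := hVinv
    have hVEinv : V * E * (F * B) = 1 := by
      rw [Matrix.mul_assoc, ← Matrix.mul_assoc E, hEF, Matrix.one_mul, hB]
    obtain ⟨E', hE', hrows'⟩ := exists_ESpStab_rows_eq_single_succ h ⟨_, hVEinv⟩
      (mul_psiMat_mul_transpose_of_mem_ESpGroup hVsp hE) (by omega) hrows
    exact ⟨E * E', mul_mem hE hE'.1, by simpa only [Matrix.mul_assoc] using hrows'⟩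

end Unimodular

/-- over a commutative local ring, every `V ∈ SpUm_{2n,2m}(R)` with
`m ≥ n ≥ 1` is completable to an elementary symplectic matrix. -/
theorem stmt7 {R : Type*} [CommRing R] [IsLocalRing R] {n m : ℕ}
    (hnm : n ≤ m)
    (V : Matrix (Fin (2 * n)) (Fin (2 * m)) R)
    (hVinv : ∃ B : Matrix (Fin (2 * m)) (Fin (2 * n)) R, V * B = 1)
    (hVsp : V * psiMat R m * Vᵀ = psiMat R n) :
    ∃ W : Matrix (Fin (2 * m)) (Fin (2 * m)) R, W ∈ ESpGroup R m ∧
      ∀ (i : Fin (2 * n)) (j : Fin (2 * m)),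
        W (Fin.castLE (by omega : 2 * n ≤ 2 * m) i) j = V i j := by
  obtain ⟨E, hE, hrows⟩ := exists_ESpGroup_rows_eq_single (by omega) hVinv hVsp le_rfl
  obtain ⟨F, hF, hEF⟩ := ESpGroup.exists_mul_eq_one hE
  refine ⟨F, hF, fun i j => ?_⟩
  rw [show V = V * E * F by rw [Matrix.mul_assoc, hEF, Matrix.mul_one], mul_apply_eq_vecMul,
    hrows i i.isLt, single_one_vecMul]
  rfl
end
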